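/- If H = (V, ℰ) is a hypergraph that has a representative support G with vertex set W ⊆ V, then H has a support G′ (a graph on vertex set V) in which every vertex of V ∖ W has degree one. -/

import Mathlib

/-- A hypergraph: a finite vertex set `V ⊆ ℕ` together with a finite family of
hyperedges, each a subset of `V` of size at least 2. -/
structure FinHypergraph where
  V : Finset ℕ
  E : Finset (Finset ℕ)
  edge_sub : ∀ F ∈ E, F ⊆ V
  edge_card : ∀ F ∈ E, 2 ≤ F.card

namespace FinHypergraph

/-- `ℰ(v)`: the set of hyperedges incident with `v`. -/
def edgesAt (H : FinHypergraph) (v : ℕ) : Finset (Finset ℕ) :=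
  H.E.filter (fun F => v ∈ F)

/-- `w` covers `v` if `ℰ(v) ⊆ ℰ(w)`. -/
def Covers (H : FinHypergraph) (w v : ℕ) : Prop :=
  H.edgesAt v ⊆ H.edgesAt w

/-- `u` and `v` are twins if `ℰ(u) = ℰ(v)`. -/
def AreTwins (H : FinHypergraph) (u v : ℕ) : Prop :=
  H.edgesAt u = H.edgesAt v

/-- The twin class of `v`: all vertices with the same incident hyperedges as `v`. -/
def twinClass (H : FinHypergraph) (v : ℕ) : Finset ℕ :=
  H.V.filter (fun u => H.edgesAt u = H.edgesAt v)

/-- `H − v`: delete vertex `v`, removing it from every hyperedge and discarding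
   the resulting sets of size less than 2. -/
def delete (H : FinHypergraph) (v : ℕ) : FinHypergraph where
  V := H.V.erase v
  E := (H.E.image (fun F => F.erase v)).filter (fun F => 2 ≤ F.card)
  edge_sub := by
    intro F hF
    simp only [Finset.mem_filter, Finset.mem_image] at hF
    obtain ⟨⟨F₀, hF₀, rfl⟩, -⟩ := hF
    intro x hx
    exact Finset.mem_erase.mpr ⟨(Finset.mem_erase.mp hx).1,
      H.edge_sub F₀ hF₀ (Finset.mem_erase.mp hx).2⟩
  edge_card := fun F hF => (Finset.mem_filter.mp hF).2

end FinHypergraph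

/-- All edges of the graph `G` have both endpoints in `W`
    (i.e. `G` is a graph on the vertex set `W`). -/
def EdgesWithin (G : SimpleGraph ℕ) (W : Finset ℕ) : Prop :=
  ∀ a b, G.Adj a b → a ∈ W ∧ b ∈ W

/-- `G` is a support for `H`: a graph on the vertex set of `H` in which every
    hyperedge induces a connected subgraph. -/
def IsSupport (H : FinHypergraph) (G : SimpleGraph ℕ) : Prop :=
  EdgesWithin G H.V ∧ ∀ F ∈ H.E, ((G.induce (F : Set ℕ)).Connected)

/-- `G` is a representative support for `H` with vertex set `W ⊆ H.V`:
    (i) every hyperedge `F` with `|F ∩ W| ≥ 2` induces (on `F ∩ W`) a connected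
    subgraph of `G`, and (ii) every vertex outside `W` is covered by a vertex of `W`. -/
def IsRepSupport (H : FinHypergraph) (W : Finset ℕ) (G : SimpleGraph ℕ) : Prop :=
  W ⊆ H.V ∧ EdgesWithin G W ∧
    (∀ F ∈ H.E, 2 ≤ (F ∩ W).card → ((G.induce ((F ∩ W : Finset ℕ) : Set ℕ)).Connected)) ∧
    (∀ v ∈ H.V \ W, ∃ w ∈ W, H.Covers w v)

/-!
Attach every vertex `v ∈ V ∖ W` as a pendant vertex to a vertex `c v ∈ W` covering it. A
hyperedge `F` containing `v` then contains `c v`, so every vertex of `F` outside `W` is adjacent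
to `F ∩ W`, which is connected (or a single vertex) by the representative support property.
-/

namespace SimpleGraph

variable {V : Type*}

theorem induce_connected_of_forall_adj {G : SimpleGraph V} {s t : Set V} (hts : t ⊆ s)
    (ht : (G.induce t).Preconnected) (hs : s.Nonempty)
    (hadj : ∀ x ∈ s, x ∉ t → ∃ y ∈ t, G.Adj x y) : (G.induce s).Connected := by
  obtain ⟨u, hu⟩ : t.Nonempty := by
    obtain ⟨x, hx⟩ := hs
    by_cases hxt : x ∈ t
    · exact ⟨x, hxt⟩
    · obtain ⟨y, hyt, -⟩ := hadj x hx hxt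
      exact ⟨y, hyt⟩
  refine G.induce_connected_of_patches u (hts hu) fun {x} hx => ?_
  by_cases hxt : x ∈ t
  · exact ⟨t, hts, hu, hxt, ht _ _⟩
  obtain ⟨y, hyt, hxy⟩ := hadj x hx hxt
  have hconn : (G.induce (t ∪ {x, y})).Connected :=
    induce_union_connected ht (induce_pair_connected_of_adj hxy).preconnected ⟨y, hyt, by simp⟩
  refine ⟨t ∪ {x, y}, ?_, Or.inl hu, Or.inr (by simp), hconn.preconnected _ _⟩
  simpa [Set.insert_subset_iff, hx] using And.intro (hts hyt) hts

/-- Add an edge from each `v ∈ S` to `c v` (none where `c v = v`). -/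
def attachPendants (G : SimpleGraph V) (S : Set V) (c : V → V) : SimpleGraph V :=
  G ⊔ fromRel fun v w => v ∈ S ∧ w = c v

variable {G : SimpleGraph V} {S : Set V} {c : V → V}

@[simp]
theorem attachPendants_adj {a b : V} :
    (G.attachPendants S c).Adj a b ↔
      G.Adj a b ∨ a ≠ b ∧ (a ∈ S ∧ b = c a ∨ b ∈ S ∧ a = c b) := by
  simp [attachPendants]

theorem le_attachPendants : G ≤ G.attachPendants S c := le_sup_left

theorem attachPendants_adj_self {v : V} (hv : v ∈ S) (hvc : v ≠ c v) :
    (G.attachPendants S c).Adj v (c v) :=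
  attachPendants_adj.mpr <| Or.inr ⟨hvc, Or.inl ⟨hv, rfl⟩⟩

theorem existsUnique_attachPendants_adj {v : V} (hv : v ∈ S) (hvc : v ≠ c v)
    (hG : ∀ u, ¬G.Adj v u) (hc : ∀ u ∈ S, c u ≠ v) :
    ∃! u, (G.attachPendants S c).Adj v u := by
  refine ⟨c v, attachPendants_adj_self hv hvc, fun u hu => ?_⟩
  rcases attachPendants_adj.mp hu with h | ⟨-, ⟨-, rfl⟩ | ⟨huS, rfl⟩⟩
  · exact absurd h (hG u)
  · rfl
  · exact absurd rfl (hc u huS)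

end SimpleGraph

open SimpleGraph

theorem EdgesWithin.mono {G : SimpleGraph ℕ} {W U : Finset ℕ} (hG : EdgesWithin G W)
    (hWU : W ⊆ U) : EdgesWithin G U :=
  fun a b hab => (hG a b hab).imp (@hWU a) (@hWU b)

theorem EdgesWithin.attachPendants {G : SimpleGraph ℕ} {U : Finset ℕ} {S : Set ℕ} {c : ℕ → ℕ}
    (hG : EdgesWithin G U) (hS : S ⊆ U) (hc : ∀ v ∈ S, c v ∈ U) :
    EdgesWithin (G.attachPendants S c) U := by
  intro a b hab
  rcases attachPendants_adj.mp hab with h | ⟨-, ⟨ha, rfl⟩ | ⟨hb, rfl⟩⟩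
  · exact hG a b h
  · exact ⟨hS ha, hc a ha⟩
  · exact ⟨hc b hb, hS hb⟩

namespace FinHypergraph

theorem Covers.mem_of_mem {H : FinHypergraph} {w v : ℕ} {F : Finset ℕ} (hwv : H.Covers w v)
    (hF : F ∈ H.E) (hv : v ∈ F) : w ∈ F :=
  (Finset.mem_filter.mp (hwv (Finset.mem_filter.mpr ⟨hF, hv⟩))).2

end FinHypergraph

namespace IsRepSupport

variable {H : FinHypergraph} {W : Finset ℕ} {G : SimpleGraph ℕ}

theorem preconnected_induce_inter (hG : IsRepSupport H W G) {F : Finset ℕ} (hF : F ∈ H.E) :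
    (G.induce ((F ∩ W : Finset ℕ) : Set ℕ)).Preconnected := by
  by_cases hcard : 2 ≤ (F ∩ W).card
  · exact (hG.2.2.1 F hF hcard).preconnected
  · have : Subsingleton (F ∩ W : Finset ℕ) :=
      Finset.card_le_one_iff_subsingleton_coe.mp (by omega)
    exact Preconnected.of_subsingleton

theorem isSupport_attachPendants (hG : IsRepSupport H W G) {c : ℕ → ℕ}
    (hc : ∀ v ∈ H.V \ W, c v ∈ W ∧ H.Covers (c v) v) :
    IsSupport H (G.attachPendants ↑(H.V \ W) c) := by
  obtain ⟨hWV, hEW, -, -⟩ := id hG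
  refine ⟨(hEW.mono hWV).attachPendants (Finset.coe_subset.mpr Finset.sdiff_subset)
    fun v hv => hWV (hc v hv).1, fun F hF => ?_⟩
  have hFV : F ⊆ H.V := H.edge_sub F hF
  refine induce_connected_of_forall_adj (t := ((F ∩ W : Finset ℕ) : Set ℕ))
    (Finset.coe_subset.mpr Finset.inter_subset_left)
    ((hG.preconnected_induce_inter hF).mono (comap_monotone _ le_attachPendants))
    (Finset.card_pos.mp (by linarith [H.edge_card F hF])) fun x hxF hxFW => ?_
  have hxW : x ∉ W := fun hxW => hxFW (Finset.mem_inter.mpr ⟨hxF, hxW⟩)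
  have hx : x ∈ H.V \ W := Finset.mem_sdiff.mpr ⟨hFV hxF, hxW⟩
  obtain ⟨hcxW, hcov⟩ := hc x hx
  refine ⟨c x, Finset.mem_inter.mpr ⟨hcov.mem_of_mem hF hxF, hcxW⟩, attachPendants_adj_self hx ?_⟩
  exact fun hxc => hxW (hxc ▸ hcxW)

end IsRepSupport

/-- If `H` has a representative support with vertex set `W ⊆ V`,
then `H` has a support in which every vertex of `V ∖ W` has degree one. -/
theorem exists_support_with_pendant_outside
    (H : FinHypergraph) (W : Finset ℕ) (G : SimpleGraph ℕ)
    (hG : IsRepSupport H W G) :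
    ∃ G' : SimpleGraph ℕ, IsSupport H G' ∧ ∀ v ∈ H.V \ W, ∃! u, G'.Adj v u := by
  choose! c hcW hcov using hG.2.2.2
  refine ⟨G.attachPendants ↑(H.V \ W) c,
    hG.isSupport_attachPendants fun v hv => ⟨hcW v hv, hcov v hv⟩, fun v hv => ?_⟩
  have hvW : v ∉ W := (Finset.mem_sdiff.mp hv).2
  exact existsUnique_attachPendants_adj hv (fun hvc => hvW (hvc ▸ hcW v hv))
    (fun u hvu => hvW (hG.2.1 v u hvu).1) fun u hu hcu => hvW (hcu ▸ hcW u hu)
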